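/- arXiv:0809.5052 — 3 statements merged into one kernel-verified Lean document; each statement's English description precedes it below -/
import Mathlib

section
/- There exists C > 0 such that for all t > 0, the kernel K_t(y) = √(t/y) · J₀'(2√(ty)) satisfies ‖K_t‖_{L^∞((0,∞))} ≤ C·t and ‖K_t‖_{L²((0,∞))} ≤ C·t^{1/2}. -/
/-!
The scaling `K_t(y) = t K_1(ty)` reduces everything to `t = 1`, where
`K_1(u) = -J₁(2√u)/√u`. The bound `|J₁(z)| ≤ |z|` gives `|K_1| ≤ 2`, which also controls the
`L²` mass on `(0, 1/4]`. On `(1/4, ∞)` one needs the decay `J₁(z)² ≤ 7/z` for `z ≥ 1`: since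
`w = √z J₀(z)` solves `w'' + (1 + 1/(4z²)) w = 0`, the energy `w'² + (1 + 1/(4z²)) w²` is
nonincreasing, and it dominates `z J₁(z)² / 2`. Hence `K_1(u)² ≤ (7/2) u^(-3/2)` for `u > 1/4`,
which is integrable.
-/

open MeasureTheory

/-- The Bessel function of the first kind of order zero, via its integral
representation `J₀(z) = (1/π) ∫_0^π cos (z sin θ) dθ`. -/
noncomputable def besselJ0 (z : ℝ) : ℝ :=
  (1 / Real.pi) * ∫ θ in (0 : ℝ)..Real.pi, Real.cos (z * Real.sin θ)

/-- The kernel `K_t(y) = √(t/y) J₀'(2√(ty))`. -/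
noncomputable def Kker (t y : ℝ) : ℝ :=
  Real.sqrt (t / y) * deriv besselJ0 (2 * Real.sqrt (t * y))

open Real Set

lemma hasDerivAt_integral_mul_comp_mul {w v f f' : ℝ → ℝ} {C : ℝ} (hw : Continuous w)
    (hv : Continuous v) (hf : ∀ x, HasDerivAt f (f' x) x) (hf' : Continuous f')
    (hC : ∀ x, |f' x| ≤ C) (a b z : ℝ) :
    HasDerivAt (fun z => ∫ θ in a..b, w θ * f (z * v θ))
      (∫ θ in a..b, w θ * (f' (z * v θ) * v θ)) z := by
  have hfc : Continuous f := continuous_iff_continuousAt.2 fun x => (hf x).continuousAt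
  refine (intervalIntegral.hasDerivAt_integral_of_dominated_loc_of_deriv_le
    (F := fun z θ => w θ * f (z * v θ)) (F' := fun z θ => w θ * (f' (z * v θ) * v θ))
    (bound := fun θ => |w θ| * (C * |v θ|)) (Metric.ball_mem_nhds z one_pos) ?_ ?_ ?_ ?_ ?_ ?_).2
  · exact .of_forall fun x => (by fun_prop : Continuous _).aestronglyMeasurable
  · exact (by fun_prop : Continuous _).intervalIntegrable _ _
  · exact (by fun_prop : Continuous _).aestronglyMeasurable
  · refine .of_forall fun θ _ x _ => ?_
    rw [norm_mul, norm_mul, Real.norm_eq_abs, Real.norm_eq_abs, Real.norm_eq_abs]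
    gcongr
    exact hC _
  · exact (by fun_prop : Continuous _).intervalIntegrable _ _
  · refine .of_forall fun θ _ x _ => ?_
    exact ((hf _).comp x ((hasDerivAt_id x).mul_const (v θ))).const_mul (w θ)
      |>.congr_deriv (by simp)

noncomputable def besselJ1 (z : ℝ) : ℝ :=
  (1 / π) * ∫ θ in (0 : ℝ)..π, sin θ * sin (z * sin θ)

lemma hasDerivAt_besselJ0 (z : ℝ) : HasDerivAt besselJ0 (-besselJ1 z) z := by
  have h := hasDerivAt_integral_mul_comp_mul (w := fun _ => 1) continuous_const continuous_sin
    hasDerivAt_cos continuous_sin.neg (fun x => by rw [abs_neg]; exact abs_sin_le_one x) 0 π z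
  simp only [one_mul] at h
  refine (h.const_mul (1 / π) : HasDerivAt besselJ0 _ z).congr_deriv ?_
  simp only [besselJ1, neg_mul, intervalIntegral.integral_neg, mul_neg, mul_comm (sin (z * _))]

lemma deriv_besselJ0 : deriv besselJ0 = fun z => -besselJ1 z :=
  funext fun z => (hasDerivAt_besselJ0 z).deriv

/-- The integrand of `z J₀ - J₁ - z ∫ sin² θ cos (z sin θ) / π` is the derivative of
`cos θ sin (z sin θ)`, which vanishes at both ends. -/
lemma besselJ1_add_eq_mul_besselJ0 (z : ℝ) :
    besselJ1 z + z * ((1 / π) * ∫ θ in (0 : ℝ)..π, sin θ ^ 2 * cos (z * sin θ)) =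
      z * besselJ0 z := by
  have hderiv : ∀ θ ∈ uIcc 0 π, HasDerivAt (fun θ => cos θ * sin (z * sin θ))
      (z * cos (z * sin θ) - sin θ * sin (z * sin θ) - z * (sin θ ^ 2 * cos (z * sin θ))) θ := by
    intro θ _
    refine ((hasDerivAt_cos θ).mul ((hasDerivAt_sin θ).const_mul z).sin).congr_deriv ?_
    linear_combination z * cos (z * sin θ) * sin_sq_add_cos_sq θ
  have hint : ∀ g : ℝ → ℝ, Continuous g → IntervalIntegrable g volume 0 π :=
    fun g hg => hg.intervalIntegrable 0 π
  have key := intervalIntegral.integral_eq_sub_of_hasDerivAt hderiv (hint _ (by fun_prop))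
  rw [intervalIntegral.integral_sub ((hint _ (by fun_prop)).sub (hint _ (by fun_prop)))
    (hint _ (by fun_prop)), intervalIntegral.integral_sub (hint _ (by fun_prop))
    (hint _ (by fun_prop)), intervalIntegral.integral_const_mul,
    intervalIntegral.integral_const_mul] at key
  simp only [cos_pi, sin_pi, cos_zero, sin_zero, mul_zero, sub_zero] at key
  rw [besselJ0, besselJ1]
  linear_combination -(1 / π) * key

lemma hasDerivAt_besselJ1 {z : ℝ} (hz : z ≠ 0) :
    HasDerivAt besselJ1 (besselJ0 z - besselJ1 z / z) z := by
  have h := hasDerivAt_integral_mul_comp_mul continuous_sin continuous_sin hasDerivAt_sin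
    continuous_cos abs_cos_le_one 0 π z
  refine (h.const_mul (1 / π) : HasDerivAt besselJ1 _ z).congr_deriv ?_
  rw [← mul_right_inj' hz, mul_sub, mul_div_cancel₀ _ hz, ← besselJ1_add_eq_mul_besselJ0]
  simp only [mul_comm (cos _), ← mul_assoc, ← pow_two]
  ring

lemma abs_inv_pi_mul_integral_le {g : ℝ → ℝ} {C : ℝ} (hg : ∀ θ, |g θ| ≤ C) :
    |(1 / π) * ∫ θ in (0 : ℝ)..π, g θ| ≤ C := by
  have h := intervalIntegral.norm_integral_le_of_norm_le_const (a := 0) (b := π)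
    (f := g) (fun θ _ => by rw [Real.norm_eq_abs]; exact hg θ)
  rw [sub_zero, abs_of_pos pi_pos] at h
  rw [abs_mul, abs_of_pos (by positivity), one_div, inv_mul_le_iff₀ pi_pos, mul_comm]
  exact h

lemma abs_besselJ0_le_one (z : ℝ) : |besselJ0 z| ≤ 1 :=
  abs_inv_pi_mul_integral_le fun _ => abs_cos_le_one _

lemma abs_besselJ1_le_abs (z : ℝ) : |besselJ1 z| ≤ |z| := by
  refine abs_inv_pi_mul_integral_le fun θ => ?_
  calc |sin θ * sin (z * sin θ)| ≤ 1 * |z * sin θ| := by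
        rw [abs_mul]
        exact mul_le_mul (abs_sin_le_one θ) abs_sin_le_abs (abs_nonneg _) zero_le_one
    _ ≤ |z| := by
        rw [one_mul, abs_mul]
        exact mul_le_of_le_one_right (abs_nonneg z) (abs_sin_le_one θ)

/-- `w'² + (1 + 1/(4z²)) w²` for `w = √z J₀(z)`, which solves `w'' + (1 + 1/(4z²)) w = 0`. -/
noncomputable def besselJ0Energy (z : ℝ) : ℝ :=
  z * (besselJ0 z ^ 2 + besselJ1 z ^ 2) - besselJ0 z * besselJ1 z + besselJ0 z ^ 2 / (2 * z)

lemma hasDerivAt_besselJ0Energy {z : ℝ} (hz : z ≠ 0) :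
    HasDerivAt besselJ0Energy (-(besselJ0 z ^ 2 / (2 * z ^ 2))) z := by
  have hJ0 := hasDerivAt_besselJ0 z
  have hJ1 := hasDerivAt_besselJ1 hz
  refine ((((hasDerivAt_id z).mul ((hJ0.pow 2).add (hJ1.pow 2))).sub (hJ0.mul hJ1)).add
    ((hJ0.pow 2).div ((hasDerivAt_id z).const_mul 2) (by simpa using hz))).congr_deriv ?_
  dsimp only [id, Pi.add_apply, Pi.pow_apply]
  field_simp
  ring

lemma besselJ0Energy_antitoneOn : AntitoneOn besselJ0Energy (Ioi 0) := by
  refine antitoneOn_of_hasDerivWithinAt_nonpos (f' := fun z => -(besselJ0 z ^ 2 / (2 * z ^ 2)))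
    (convex_Ioi 0)
    (fun z hz => (hasDerivAt_besselJ0Energy (ne_of_gt hz)).continuousAt.continuousWithinAt)
    (fun z hz => ?_) fun z _ => neg_nonpos.2 (by positivity)
  rw [interior_Ioi] at hz ⊢
  exact (hasDerivAt_besselJ0Energy (ne_of_gt hz)).hasDerivWithinAt

lemma mul_sq_besselJ1_le_besselJ0Energy {z : ℝ} (hz : 0 < z) :
    z * besselJ1 z ^ 2 ≤ 2 * besselJ0Energy z := by
  rw [besselJ0Energy, ← sub_nonneg, ← mul_nonneg_iff_of_pos_left hz]
  have key : z * (2 * (z * (besselJ0 z ^ 2 + besselJ1 z ^ 2) - besselJ0 z * besselJ1 z +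
      besselJ0 z ^ 2 / (2 * z)) - z * besselJ1 z ^ 2) =
      2 * (z * besselJ0 z) ^ 2 + (z * besselJ1 z - besselJ0 z) ^ 2 := by
    field_simp
    ring
  rw [key]
  positivity

lemma besselJ0Energy_one_le : besselJ0Energy 1 ≤ 7 / 2 := by
  have h0 := abs_besselJ0_le_one 1
  have h1 := abs_besselJ1_le_abs 1
  rw [abs_one] at h1
  rw [abs_le] at h0 h1
  simp only [besselJ0Energy]
  nlinarith

lemma sq_besselJ1_le {z : ℝ} (hz : 1 ≤ z) : besselJ1 z ^ 2 ≤ 7 / z := by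
  have hz0 : 0 < z := by linarith
  rw [le_div_iff₀ hz0, mul_comm]
  calc z * besselJ1 z ^ 2 ≤ 2 * besselJ0Energy z := mul_sq_besselJ1_le_besselJ0Energy hz0
    _ ≤ 2 * besselJ0Energy 1 := by
      gcongr
      exact besselJ0Energy_antitoneOn (mem_Ioi.2 one_pos) (mem_Ioi.2 hz0) hz
    _ ≤ 7 := by linarith [besselJ0Energy_one_le]

lemma Kker_eq_mul_Kker_one {t : ℝ} (ht : 0 < t) (y : ℝ) : Kker t y = t * Kker 1 (t * y) := by
  rw [Kker, Kker, one_mul, ← mul_assoc]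
  congr 1
  rw [← sqrt_sq ht.le, ← sqrt_mul (sq_nonneg t), sqrt_sq ht.le]
  congr 1
  field_simp

lemma Kker_one_eq (u : ℝ) : Kker 1 u = -(besselJ1 (2 * √u) / √u) := by
  rw [Kker, deriv_besselJ0, one_mul, one_div, sqrt_inv]
  ring

lemma abs_Kker_one_le (u : ℝ) : |Kker 1 u| ≤ 2 := by
  have h := abs_besselJ1_le_abs (2 * √u)
  rw [abs_of_nonneg (by positivity : (0 : ℝ) ≤ 2 * √u)] at h
  rw [Kker_one_eq, abs_neg, abs_div, abs_of_nonneg (sqrt_nonneg u)]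
  exact div_le_of_le_mul₀ (sqrt_nonneg u) zero_le_two h

lemma sq_Kker_one_le {u : ℝ} (hu : 1 / 4 ≤ u) : Kker 1 u ^ 2 ≤ 7 / 2 * u ^ (-(3 / 2) : ℝ) := by
  have hu0 : 0 < u := by linarith
  have hsqrt : 1 ≤ 2 * √u := by
    have : √(1 / 4) = 1 / 2 := by
      rw [show (1 / 4 : ℝ) = (1 / 2) ^ 2 by norm_num, sqrt_sq (by norm_num)]
    linarith [sqrt_le_sqrt hu]
  have hrpow : u ^ (-(3 / 2) : ℝ) = 1 / (u * √u) := by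
    rw [rpow_neg hu0.le, show (3 / 2 : ℝ) = 1 + 1 / 2 by norm_num, rpow_add hu0, rpow_one,
      ← sqrt_eq_rpow, one_div]
  rw [Kker_one_eq, neg_sq, div_pow, sq_sqrt hu0.le, hrpow, div_le_iff₀ hu0]
  calc besselJ1 (2 * √u) ^ 2 ≤ 7 / (2 * √u) := sq_besselJ1_le hsqrt
    _ = 7 / 2 * (1 / (u * √u)) * u := by field_simp

lemma integral_sq_Kker_one_le : ∫ u in Ioi 0, Kker 1 u ^ 2 ≤ 15 := by
  have hmeas : Measurable fun u => Kker 1 u ^ 2 := by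
    unfold Kker
    fun_prop
  have hsq_le (u : ℝ) : Kker 1 u ^ 2 ≤ 4 := by
    nlinarith [abs_Kker_one_le u, sq_abs (Kker 1 u), abs_nonneg (Kker 1 u)]
  have hrpow : IntegrableOn (fun u : ℝ => 7 / 2 * u ^ (-(3 / 2) : ℝ)) (Ioi (1 / 4)) :=
    (integrableOn_Ioi_rpow_of_lt (by norm_num) (by norm_num)).const_mul _
  have hnear : IntegrableOn (fun u => Kker 1 u ^ 2) (Ioc 0 (1 / 4)) :=
    Measure.integrableOn_of_bounded measure_Ioc_lt_top.ne hmeas.aestronglyMeasurable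
      (.of_forall fun u => by rw [Real.norm_eq_abs, abs_of_nonneg (sq_nonneg _)]; exact hsq_le u)
  have hfar : IntegrableOn (fun u => Kker 1 u ^ 2) (Ioi (1 / 4)) :=
    hrpow.mono' hmeas.aestronglyMeasurable.restrict ((ae_restrict_iff' measurableSet_Ioi).2
      (.of_forall fun u hu => by
        rw [Real.norm_eq_abs, abs_of_nonneg (sq_nonneg _)]; exact sq_Kker_one_le (le_of_lt hu)))
  rw [← Ioc_union_Ioi_eq_Ioi (by norm_num : (0 : ℝ) ≤ 1 / 4),
    setIntegral_union (Ioc_disjoint_Ioi le_rfl) measurableSet_Ioi hnear hfar]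
  have hnear_le : ∫ u in Ioc 0 (1 / 4), Kker 1 u ^ 2 ≤ 1 := by
    calc ∫ u in Ioc 0 (1 / 4), Kker 1 u ^ 2 ≤ ∫ u in Ioc (0 : ℝ) (1 / 4), (4 : ℝ) :=
          setIntegral_mono_on hnear (integrableOn_const measure_Ioc_lt_top.ne) measurableSet_Ioc
            fun u _ => hsq_le u
      _ = 1 := by simp
  have hfar_le : ∫ u in Ioi (1 / 4), Kker 1 u ^ 2 ≤ 14 := by
    calc ∫ u in Ioi (1 / 4), Kker 1 u ^ 2 ≤ ∫ u in Ioi (1 / 4 : ℝ), 7 / 2 * u ^ (-(3 / 2) : ℝ) :=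
          setIntegral_mono_on hfar hrpow measurableSet_Ioi fun u hu => sq_Kker_one_le (le_of_lt hu)
      _ = 14 := by
        rw [integral_const_mul, integral_Ioi_rpow_of_lt (by norm_num) (by norm_num)]
        norm_num
  linarith

lemma integral_sq_Kker {t : ℝ} (ht : 0 < t) :
    ∫ y in Ioi 0, Kker t y ^ 2 = t * ∫ u in Ioi 0, Kker 1 u ^ 2 := by
  simp_rw [Kker_eq_mul_Kker_one ht, mul_pow]
  rw [integral_const_mul, integral_comp_mul_left_Ioi (fun u => Kker 1 u ^ 2) 0 ht, mul_zero,
    smul_eq_mul, ← mul_assoc, sq, mul_assoc t, mul_inv_cancel₀ ht.ne', mul_one]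

theorem Kt_bounds :
    ∃ C : ℝ, 0 < C ∧ ∀ t : ℝ, 0 < t →
      (∀ y : ℝ, 0 < y → |Kker t y| ≤ C * t) ∧
      (∫ y in Set.Ioi (0 : ℝ), (Kker t y) ^ 2) ^ (1 / 2 : ℝ) ≤ C * t ^ (1 / 2 : ℝ) := by
  refine ⟨4, by norm_num, fun t ht => ⟨fun y _ => ?_, ?_⟩⟩
  · rw [Kker_eq_mul_Kker_one ht, abs_mul, abs_of_pos ht, mul_comm]
    linarith [mul_le_mul_of_nonneg_right (abs_Kker_one_le (t * y)) ht.le]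
  · rw [← sqrt_eq_rpow, ← sqrt_eq_rpow, integral_sq_Kker ht]
    calc √(t * ∫ u in Ioi 0, Kker 1 u ^ 2) ≤ √(t * 4 ^ 2) := by
          gcongr
          linarith [integral_sq_Kker_one_le]
      _ = 4 * √t := by rw [sqrt_mul' t (by positivity), sqrt_sq (by norm_num), mul_comm]
end

section
/- Let u be a smooth solution of the short-pulse equation u_{xt} = u + (1/6)(u³)_{xx}. Then the pointwise balance law ∂_t(√(1+u_x²) - 1) = (1/2)∂_x(u²√(1+u_x²)) holds. -/
private lemma slice_x {G : ℝ × ℝ → ℝ} (hG : ContDiff ℝ (⊤ : ℕ∞) G) (x t : ℝ) :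
    HasDerivAt (fun x' => G (x', t)) (fderiv ℝ G (x, t) (1, 0)) x :=
  (hG.differentiable (by simp) (x, t)).hasFDerivAt.comp_hasDerivAt x
    ((hasDerivAt_id x).prodMk (hasDerivAt_const x t))

private lemma slice_t {G : ℝ × ℝ → ℝ} (hG : ContDiff ℝ (⊤ : ℕ∞) G) (x t : ℝ) :
    HasDerivAt (fun t' => G (x, t')) (fderiv ℝ G (x, t) (0, 1)) t :=
  (hG.differentiable (by simp) (x, t)).hasFDerivAt.comp_hasDerivAt t
    ((hasDerivAt_const t x).prodMk (hasDerivAt_id t))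

theorem shortpulse_balance_energy (u : ℝ → ℝ → ℝ)
    (hu : ContDiff ℝ (⊤ : ℕ∞) (Function.uncurry u))
    (hpde : ∀ x t : ℝ,
      deriv (fun t' => deriv (fun x' => u x' t') x) t
        = u x t + (1 / 6) * deriv (deriv (fun x' => (u x' t) ^ 3)) x) :
    ∀ x t : ℝ,
      deriv (fun t' => Real.sqrt (1 + (deriv (fun x' => u x' t') x) ^ 2) - 1) t
        = (1 / 2) * deriv
            (fun x' => (u x' t) ^ 2 * Real.sqrt (1 + (deriv (fun z => u z t) x') ^ 2)) x := by
  intro x t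
  set F : ℝ × ℝ → ℝ := Function.uncurry u with hF
  have hFu : ContDiff ℝ (⊤ : ℕ∞) F := hu
  set Dx : ℝ × ℝ → ℝ := fun p => fderiv ℝ F p (1, 0) with hDxdef
  have hDx : ContDiff ℝ (⊤ : ℕ∞) Dx := (hFu.fderiv_right (by simp)).clm_apply contDiff_const
  -- slice derivatives of u
  have hux : ∀ x' t' : ℝ, HasDerivAt (fun z => u z t') (Dx (x', t')) x' := by
    intro x' t'; exact slice_x hFu x' t'
  have hderiv_u : ∀ x' t' : ℝ, deriv (fun z => u z t') x' = Dx (x', t') := by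
    intro x' t'; exact (hux x' t').deriv
  -- names
  set U : ℝ := u x t with hU
  set ux : ℝ := Dx (x, t) with huxv
  set uxx : ℝ := fderiv ℝ Dx (x, t) (1, 0) with huxx
  set uxt : ℝ := fderiv ℝ Dx (x, t) (0, 1) with huxt
  set s : ℝ := Real.sqrt (1 + ux ^ 2) with hs
  have hpos : (0:ℝ) < 1 + ux ^ 2 := by positivity
  have hsne : s ≠ 0 := by
    rw [hs]; exact ne_of_gt (Real.sqrt_pos.mpr hpos)
  have hss : s * s = 1 + ux ^ 2 := Real.mul_self_sqrt (le_of_lt hpos)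
  -- second x-derivative slice
  have huxx' : ∀ x' : ℝ, HasDerivAt (fun z => Dx (z, t)) (fderiv ℝ Dx (x', t) (1, 0)) x' := by
    intro x'; exact slice_x hDx x' t
  -- t-derivative of Dx slice
  have huxt' : HasDerivAt (fun t' => Dx (x, t')) uxt t := slice_t hDx x t
  -- rewrite the PDE in these terms
  have hcube : deriv (deriv (fun x' => (u x' t) ^ 3)) x = 6 * U * ux ^ 2 + 3 * U ^ 2 * uxx := by
    have h1 : deriv (fun x' => (u x' t) ^ 3) = fun x' => 3 * (u x' t) ^ 2 * Dx (x', t) := by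
      funext x'
      have this : deriv (fun z => u z t ^ 3) x' = _ := ((hux x' t).pow 3).deriv
      simpa using this
    rw [h1]
    have h2 : HasDerivAt (fun x' => 3 * (u x' t) ^ 2 * Dx (x', t))
        ((3 * (2 * u x t * ux)) * Dx (x, t) + (3 * (u x t) ^ 2) * uxx) x := by
      have ha : HasDerivAt (fun x' => 3 * (u x' t) ^ 2) (3 * (2 * u x t * ux)) x := by
        have := ((hux x t).pow 2).const_mul 3
        simpa [mul_assoc] using this
      have this : HasDerivAt (fun x' => 3 * (u x' t) ^ 2 * Dx (x', t)) _ x := ha.mul (huxx' x)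
      simpa [huxx, huxv] using this
    rw [h2.deriv]; rw [hU, huxv]; ring
  have hpde' : uxt = U + U * ux ^ 2 + (1 / 2) * U ^ 2 * uxx := by
    have h := hpde x t
    have h2 : deriv (fun t' => deriv (fun x' => u x' t') x) t = uxt := by
      have : (fun t' => deriv (fun x' => u x' t') x) = fun t' => Dx (x, t') := by
        funext t'; exact hderiv_u x t'
      rw [this, huxt'.deriv]
    rw [h2, hcube] at h
    rw [h, hU]; ring
  -- LHS computation
  have hLHS : deriv (fun t' => Real.sqrt (1 + (deriv (fun x' => u x' t') x) ^ 2) - 1) t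
      = (2 * ux * uxt) / (2 * s) := by
    have heq : (fun t' => Real.sqrt (1 + (deriv (fun x' => u x' t') x) ^ 2) - 1)
        = fun t' => Real.sqrt (1 + (Dx (x, t')) ^ 2) - 1 := by
      funext t'; rw [hderiv_u x t']
    rw [heq]
    have h1 : HasDerivAt (fun t' => 1 + (Dx (x, t')) ^ 2) (2 * ux * uxt) t := by
      have this : HasDerivAt (fun t' => 1 + (Dx (x, t')) ^ 2) _ t := (hasDerivAt_const t (1:ℝ)).add (huxt'.pow 2)
      simpa [huxv, mul_assoc, mul_comm] using this
    have h2 := (h1.sqrt (ne_of_gt hpos)).sub_const 1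
    rw [h2.deriv, hs]
  -- RHS computation
  have hRHS : deriv (fun x' => (u x' t) ^ 2 * Real.sqrt (1 + (deriv (fun z => u z t) x') ^ 2)) x
      = (2 * U * ux) * s + U ^ 2 * ((2 * ux * uxx) / (2 * s)) := by
    have heq : (fun x' => (u x' t) ^ 2 * Real.sqrt (1 + (deriv (fun z => u z t) x') ^ 2))
        = fun x' => (u x' t) ^ 2 * Real.sqrt (1 + (Dx (x', t)) ^ 2) := by
      funext x'; rw [hderiv_u x' t]
    rw [heq]
    have ha : HasDerivAt (fun x' => (u x' t) ^ 2) (2 * U * ux) x := by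
      have this : HasDerivAt (fun x' => (u x' t) ^ 2) _ x := (hux x t).pow 2
      simpa [hU, huxv, mul_assoc, mul_comm] using this
    have hb1 : HasDerivAt (fun x' => 1 + (Dx (x', t)) ^ 2) (2 * ux * uxx) x := by
      have this : HasDerivAt (fun x' => 1 + (Dx (x', t)) ^ 2) _ x := (hasDerivAt_const x (1:ℝ)).add ((huxx' x).pow 2)
      simpa [huxv, huxx, mul_assoc, mul_comm] using this
    have hb := hb1.sqrt (ne_of_gt hpos)
    have this : HasDerivAt (fun x' => (u x' t) ^ 2 * Real.sqrt (1 + (Dx (x', t)) ^ 2)) _ x := ha.mul hb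
    rw [this.deriv, hs, hU]
  rw [hLHS, hRHS, hpde']
  field_simp
  linear_combination (-2 * U * ux) * hss
end

section
/- Let w be a smooth solution of w_{yt} = sin(w). Then the pointwise balance law ∂_t(cos(w) w_t²) = ∂_y(w_{tt}² - (1/4)w_t⁴) holds. -/
open Real

noncomputable def pdv (v : ℝ × ℝ) (f : ℝ × ℝ → ℝ) : ℝ × ℝ → ℝ :=
  fun p => fderiv ℝ f p v

lemma hasDerivAt_partial_t {f : ℝ × ℝ → ℝ} {y t : ℝ}
    (hf : DifferentiableAt ℝ f (y, t)) :
    HasDerivAt (fun t' => f (y, t')) (pdv (0, 1) f (y, t)) t := by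
  have hline : HasFDerivAt (fun t' : ℝ => ((y, t') : ℝ × ℝ))
      ((0 : ℝ →L[ℝ] ℝ).prod (ContinuousLinearMap.id ℝ ℝ)) t :=
    HasFDerivAt.prodMk (hasFDerivAt_const y t) (hasFDerivAt_id t)
  have h := (hf.hasFDerivAt.comp t hline).hasDerivAt
  exact h

lemma hasDerivAt_partial_y {f : ℝ × ℝ → ℝ} {y t : ℝ}
    (hf : DifferentiableAt ℝ f (y, t)) :
    HasDerivAt (fun y' => f (y', t)) (pdv (1, 0) f (y, t)) y := by
  have hline : HasFDerivAt (fun y' : ℝ => ((y', t) : ℝ × ℝ))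
      ((ContinuousLinearMap.id ℝ ℝ).prod (0 : ℝ →L[ℝ] ℝ)) y :=
    HasFDerivAt.prodMk (hasFDerivAt_id y) (hasFDerivAt_const t y)
  have h := (hf.hasFDerivAt.comp y hline).hasDerivAt
  exact h

lemma contDiff_pdv {f : ℝ × ℝ → ℝ} (hf : ContDiff ℝ (⊤ : ℕ∞) f) (v : ℝ × ℝ) :
    ContDiff ℝ (⊤ : ℕ∞) (pdv v f) :=
  (ContinuousLinearMap.apply ℝ ℝ v).contDiff.comp (hf.fderiv_right (by simp))

lemma pdv_swap {f : ℝ × ℝ → ℝ} (hf : ContDiff ℝ (⊤ : ℕ∞) f) (v u : ℝ × ℝ) (p : ℝ × ℝ) :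
    pdv u (pdv v f) p = pdv v (pdv u f) p := by
  have hdf : Differentiable ℝ (fderiv ℝ f) :=
    (hf.fderiv_right (m := (⊤ : ℕ∞)) (by simp)).differentiable (by simp)
  have key : ∀ a b : ℝ × ℝ,
      pdv b (pdv a f) p = fderiv ℝ (fderiv ℝ f) p b a := by
    intro a b
    have h := ((ContinuousLinearMap.apply ℝ ℝ a).hasFDerivAt.comp p
      (hdf p).hasFDerivAt).fderiv
    have e : pdv a f = ⇑(ContinuousLinearMap.apply ℝ ℝ a) ∘ fderiv ℝ f := rfl
    show fderiv ℝ (pdv a f) p b = _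
    rw [e, h]
    rfl
  have hsymm := second_derivative_symmetric
    (f' := fderiv ℝ f) (f'' := fderiv ℝ (fderiv ℝ f) p) (f := f)
    (fun q => ((hf.differentiable (by simp)) q).hasFDerivAt)
    (hdf p).hasFDerivAt u v
  rw [key v u, key u v, hsymm]

theorem sineGordon_balance_law_Em1 (w : ℝ → ℝ → ℝ)
    (hw : ContDiff ℝ (⊤ : ℕ∞) (Function.uncurry w))
    (hpde : ∀ y t : ℝ,
      deriv (fun y' => deriv (fun t' => w y' t') t) y = Real.sin (w y t)) :
    ∀ y t : ℝ,
      deriv (fun t' => Real.cos (w y t') * (deriv (fun t'' => w y t'') t') ^ 2) t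
        = deriv (fun y' =>
            (deriv (fun t' => deriv (fun t'' => w y' t'') t') t) ^ 2
              - (1 / 4) * (deriv (fun t' => w y' t') t) ^ 4) y := by
  set u : ℝ × ℝ → ℝ := Function.uncurry w with hu_def
  have hu : ContDiff ℝ (⊤ : ℕ∞) u := hw
  have hDt : ContDiff ℝ (⊤ : ℕ∞) (pdv (0,1) u) := contDiff_pdv hu _
  have hDtt : ContDiff ℝ (⊤ : ℕ∞) (pdv (0,1) (pdv (0,1) u)) := contDiff_pdv hDt _
  have hDyt : ContDiff ℝ (⊤ : ℕ∞) (pdv (1,0) (pdv (0,1) u)) := contDiff_pdv hDt _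
  -- A : first t-derivative
  have A : ∀ y t : ℝ, deriv (fun t' => w y t') t = pdv (0,1) u (y, t) := by
    intro y t
    exact (hasDerivAt_partial_t ((hu.differentiable (by simp)) (y, t))).deriv
  -- B : second t-derivative
  have B : ∀ y t : ℝ,
      deriv (fun t' => deriv (fun t'' => w y t'') t') t
        = pdv (0,1) (pdv (0,1) u) (y, t) := by
    intro y t
    have : (fun t' => deriv (fun t'' => w y t'') t')
        = fun t' => pdv (0,1) u (y, t') := funext fun t' => A y t'
    rw [this]
    exact (hasDerivAt_partial_t ((hDt.differentiable (by simp)) (y, t))).deriv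
  -- C : the PDE in pdv form
  have C : ∀ y t : ℝ, pdv (1,0) (pdv (0,1) u) (y, t) = Real.sin (w y t) := by
    intro y t
    have h1 : (fun y' => deriv (fun t' => w y' t') t)
        = fun y' => pdv (0,1) u (y', t) := funext fun y' => A y' t
    have h2 := hpde y t
    rw [h1] at h2
    rw [← h2]
    exact ((hasDerivAt_partial_y ((hDt.differentiable (by simp)) (y, t))).deriv).symm
  -- E : pdv (0,1) applied to pdv (1,0) (pdv (0,1) u) equals cos(w) * w_t
  have E : ∀ y t : ℝ,
      pdv (0,1) (pdv (1,0) (pdv (0,1) u)) (y, t)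
        = Real.cos (w y t) * pdv (0,1) u (y, t) := by
    intro y t
    have hfun : (fun t' => pdv (1,0) (pdv (0,1) u) (y, t'))
        = fun t' => Real.sin (w y t') := funext fun t' => C y t'
    have h1 : HasDerivAt (fun t' => pdv (1,0) (pdv (0,1) u) (y, t'))
        (pdv (0,1) (pdv (1,0) (pdv (0,1) u)) (y, t)) t :=
      hasDerivAt_partial_t ((hDyt.differentiable (by simp)) (y, t))
    have h2 : HasDerivAt (fun t' => Real.sin (w y t'))
        (Real.cos (w y t) * pdv (0,1) u (y, t)) t := by
      have hw' : HasDerivAt (fun t' => w y t') (pdv (0,1) u (y, t)) t :=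
        hasDerivAt_partial_t ((hu.differentiable (by simp)) (y, t))
      simpa using hw'.sin
    rw [hfun] at h1
    exact h1.unique h2
  -- F : mixed third derivative
  have F : ∀ y t : ℝ,
      pdv (1,0) (pdv (0,1) (pdv (0,1) u)) (y, t)
        = Real.cos (w y t) * pdv (0,1) u (y, t) := by
    intro y t
    rw [pdv_swap hDt (0,1) (1,0) (y, t)]
    exact E y t
  intro y t
  set wt := pdv (0,1) u (y, t) with hwt
  set wtt := pdv (0,1) (pdv (0,1) u) (y, t) with hwtt
  -- LHS
  have hL : (fun t' => Real.cos (w y t') * (deriv (fun t'' => w y t'') t') ^ 2)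
      = fun t' => Real.cos (w y t') * (pdv (0,1) u (y, t')) ^ 2 :=
    funext fun t' => by rw [A y t']
  have h1 : HasDerivAt (fun t' => w y t') wt t :=
    hasDerivAt_partial_t ((hu.differentiable (by simp)) (y, t))
  have h2 : HasDerivAt (fun t' => pdv (0,1) u (y, t')) wtt t :=
    hasDerivAt_partial_t ((hDt.differentiable (by simp)) (y, t))
  have hLd : HasDerivAt
      (fun t' => Real.cos (w y t') * (pdv (0,1) u (y, t')) ^ 2)
      ((-Real.sin (w y t) * wt) * wt ^ 2
        + Real.cos (w y t) * (2 * wt ^ 1 * wtt)) t := by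
    have := (h1.cos).mul (h2.pow 2)
    exact this.congr_deriv (by simp only [hwt]; norm_num <;> ring)
  -- RHS
  have hR : (fun y' =>
      (deriv (fun t' => deriv (fun t'' => w y' t'') t') t) ^ 2
        - (1 / 4) * (deriv (fun t' => w y' t') t) ^ 4)
      = fun y' => (pdv (0,1) (pdv (0,1) u) (y', t)) ^ 2
        - (1 / 4) * (pdv (0,1) u (y', t)) ^ 4 :=
    funext fun y' => by rw [A y' t, B y' t]
  have h3 : HasDerivAt (fun y' => pdv (0,1) (pdv (0,1) u) (y', t))
      (pdv (1,0) (pdv (0,1) (pdv (0,1) u)) (y, t)) y :=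
    hasDerivAt_partial_y ((hDtt.differentiable (by simp)) (y, t))
  have h4 : HasDerivAt (fun y' => pdv (0,1) u (y', t))
      (Real.sin (w y t)) y := by
    have := hasDerivAt_partial_y ((hDt.differentiable (by simp)) (y, t))
    rwa [C y t] at this
  have hRd : HasDerivAt
      (fun y' => (pdv (0,1) (pdv (0,1) u) (y', t)) ^ 2
        - (1 / 4) * (pdv (0,1) u (y', t)) ^ 4)
      (2 * wtt ^ 1 * (pdv (1,0) (pdv (0,1) (pdv (0,1) u)) (y, t))
        - (1 / 4) * (4 * wt ^ 3 * Real.sin (w y t))) y := by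
    have := (h3.pow 2).sub ((h4.pow 4).const_mul (1/4 : ℝ))
    exact this.congr_deriv (by simp only [hwt, hwtt]; norm_num <;> ring)
  rw [hL, hR, hLd.deriv, hRd.deriv, F y t]
  ring
end
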